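/- Let D ≥ 1, μ ∈ ℝ, σ > 0, and let X₀, X₁, …, X_D be i.i.d. with distribution N(μ, σ²). Then for every real t, P( X₀ > X₁ > ⋯ > X_D and X_D ≤ t ) = (1/D!) · ∫_{−∞}^{t} (1 − Φ((x−μ)/σ))^{D} · (1/σ) φ((x−μ)/σ) dx. In particular P(X₀ > X₁ > ⋯ > X_D) = 1/(D+1)! and the conditional density of X_D given the all-decreasing dynamic pattern X₀ > X₁ > ⋯ > X_D is the beta-normal density BN(1, D+1, μ, σ)(x) = (D+1)·(1−Φ((x−μ)/σ))^D · (1/σ) φ((x−μ)/σ). -/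

import Mathlib

open MeasureTheory ProbabilityTheory
open scoped ENNReal NNReal

/-- The standard normal p.d.f. `φ`. -/
noncomputable def stdPhi (x : ℝ) : ℝ := Real.exp (-(x ^ 2) / 2) / Real.sqrt (2 * Real.pi)

/-- The standard normal c.d.f. `Φ`. -/
noncomputable def stdCDF (x : ℝ) : ℝ := ∫ t in Set.Iic x, stdPhi t

lemma stdPhi_nonneg (x : ℝ) : 0 ≤ stdPhi x := by
  rw [stdPhi]; positivity

lemma gaussianPDFReal_zero_one : gaussianPDFReal 0 1 = stdPhi := by
  ext x
  rw [gaussianPDFReal, stdPhi]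
  norm_num [div_eq_inv_mul]

lemma integrable_stdPhi : Integrable stdPhi := by
  have h : Integrable (fun x : ℝ => Real.exp (-(2:ℝ)⁻¹ * x ^ 2)) :=
    integrable_exp_neg_mul_sq (by norm_num)
  have heq : stdPhi = fun x => Real.exp (-(2:ℝ)⁻¹ * x ^ 2) / Real.sqrt (2 * Real.pi) := by
    ext x; rw [stdPhi]; congr 1; ring_nf
  rw [heq]
  exact h.div_const _

lemma gaussianReal_std_Iic (c : ℝ) :
    gaussianReal 0 1 (Set.Iic c) = ENNReal.ofReal (stdCDF c) := by
  rw [gaussianReal_of_var_ne_zero _ one_ne_zero, withDensity_apply _ measurableSet_Iic]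
  have h1 : ∀ u : ℝ, gaussianPDF 0 1 u = ENNReal.ofReal (stdPhi u) := by
    intro u; rw [gaussianPDF, gaussianPDFReal_zero_one]
  simp_rw [h1]
  rw [← ofReal_integral_eq_lintegral_ofReal integrable_stdPhi.integrableOn
    (Filter.Eventually.of_forall fun x => stdPhi_nonneg x)]
  rfl

-- sorting lemma
lemma exists_unique_sortPerm {n : ℕ} {z : Fin n → ℝ} (hz : Function.Injective z) :
    ∃! π : Equiv.Perm (Fin n), StrictAnti (z ∘ π) := by
  have hmono : Monotone (z ∘ Tuple.sort z) := Tuple.monotone_sort z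
  have hsm : StrictMono (z ∘ Tuple.sort z) :=
    hmono.strictMono_of_injective (hz.comp (Tuple.sort z).injective)
  refine ⟨(Fin.revPerm).trans (Tuple.sort z), ?_, ?_⟩
  · intro a b hab
    simp only [Function.comp_apply, Equiv.trans_apply, Fin.revPerm_apply]
    exact hsm (by simpa using hab)
  · intro π hπ
    have h1 : StrictAnti (z ∘ ((Fin.revPerm).trans (Tuple.sort z))) := by
      intro a b hab
      simp only [Function.comp_apply, Equiv.trans_apply, Fin.revPerm_apply]
      exact hsm (by simpa using hab)
    have hr : Set.range (z ∘ π) = Set.range (z ∘ ((Fin.revPerm).trans (Tuple.sort z))) := by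
      rw [Set.range_comp, Set.range_comp, Equiv.range_eq_univ, Equiv.range_eq_univ]
    have := (StrictAnti.range_inj hπ h1).mp hr
    ext i
    exact congrArg Fin.val (hz (congrFun this i))

/-- Extend a permutation of `Fin D` to `Fin (D+1)` fixing the last element. -/
def extPerm {D : ℕ} (π : Equiv.Perm (Fin D)) : Equiv.Perm (Fin (D + 1)) where
  toFun := Fin.lastCases (Fin.last D) (fun i => (π i).castSucc)
  invFun := Fin.lastCases (Fin.last D) (fun i => (π.symm i).castSucc)
  left_inv := by
    intro k
    induction k using Fin.lastCases with
    | last => simp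
    | cast i => simp
  right_inv := by
    intro k
    induction k using Fin.lastCases with
    | last => simp
    | cast i => simp

@[simp] lemma extPerm_last {D : ℕ} (π : Equiv.Perm (Fin D)) :
    extPerm π (Fin.last D) = Fin.last D := by simp [extPerm]

@[simp] lemma extPerm_castSucc {D : ℕ} (π : Equiv.Perm (Fin D)) (i : Fin D) :
    extPerm π i.castSucc = (π i).castSucc := by simp [extPerm]

section core
variable {ν : Measure ℝ} [IsProbabilityMeasure ν]

lemma map_comp_perm {n : ℕ} (τ : Equiv.Perm (Fin n)) :
    (Measure.pi fun _ : Fin n => ν).map (fun x => x ∘ τ) = Measure.pi (fun _ => ν) := by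
  refine (Measure.pi_eq (μ := fun _ : Fin n => ν) fun s hs => ?_).symm
  have hm : Measurable (fun x : Fin n → ℝ => x ∘ τ) :=
    measurable_pi_lambda _ fun i => measurable_pi_apply _
  rw [Measure.map_apply hm (MeasurableSet.univ_pi hs)]
  have : (fun x : Fin n → ℝ => x ∘ τ) ⁻¹' Set.univ.pi s
      = Set.univ.pi (fun j => s (τ.symm j)) := by
    ext x
    simp only [Set.mem_preimage, Set.mem_pi, Set.mem_univ, true_implies, Function.comp_apply]
    constructor
    · intro h j; simpa using h (τ.symm j)
    · intro h i; simpa using h (τ i)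
  rw [this, Measure.pi_pi (fun _ : Fin n => ν)]
  exact (Equiv.prod_comp τ.symm fun i => ν (s i))

lemma comp_perm_preserving {n : ℕ} (τ : Equiv.Perm (Fin n)) :
    MeasurePreserving (fun x : Fin n → ℝ => x ∘ τ)
      (Measure.pi fun _ => ν) (Measure.pi fun _ => ν) :=
  ⟨measurable_pi_lambda _ fun i => measurable_pi_apply _, map_comp_perm τ⟩

lemma pair_null [NullSingletonClass ν] {n : ℕ} (i j : Fin (n + 1)) (hij : i ≠ j) :
    Measure.pi (fun _ : Fin (n + 1) => ν) {x | x i = x j} = 0 := by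
  obtain ⟨k, hk⟩ : ∃ k, i.succAbove k = j := Fin.exists_succAbove_eq hij.symm
  have mp := measurePreserving_piFinSuccAbove (fun _ : Fin (n + 1) => ν) i
  set e := MeasurableEquiv.piFinSuccAbove (fun _ : Fin (n + 1) => ℝ) i with he
  have hset : {x : Fin (n + 1) → ℝ | x i = x j}
      = e ⁻¹' {p : ℝ × (Fin n → ℝ) | p.1 = p.2 k} := by
    ext x
    simp [he, MeasurableEquiv.piFinSuccAbove_apply, Fin.removeNth, hk]
  have hms : MeasurableSet {p : ℝ × (Fin n → ℝ) | p.1 = p.2 k} :=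
    measurableSet_eq_fun measurable_fst ((measurable_pi_apply k).comp measurable_snd)
  rw [hset, mp.measure_preimage hms.nullMeasurableSet, Measure.prod_apply hms]
  have h0 : ∀ y : ℝ, (Measure.pi fun _ : Fin n => ν)
      (Prod.mk y ⁻¹' {p : ℝ × (Fin n → ℝ) | p.1 = p.2 k}) = 0 := by
    intro y
    have hpre : Prod.mk y ⁻¹' {p : ℝ × (Fin n → ℝ) | p.1 = p.2 k}
        = {a : Fin n → ℝ | a k = y} := by
      ext z; simp [eq_comm]
    rw [hpre]
    exact Measure.pi_hyperplane (fun _ : Fin n => ν) k y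
  simp only [h0, lintegral_zero]

lemma noninj_null [NullSingletonClass ν] {n : ℕ} :
    Measure.pi (fun _ : Fin (n + 1) => ν) {x | ¬ Function.Injective x} = 0 := by
  have hsub : {x : Fin (n + 1) → ℝ | ¬ Function.Injective x}
      ⊆ ⋃ (i : Fin (n + 1)) (j : Fin (n + 1)) (_ : i ≠ j), {x | x i = x j} := by
    intro x hx
    simp only [Function.Injective, not_forall] at hx
    obtain ⟨i, j, hxij, hij⟩ := hx
    exact Set.mem_iUnion.2 ⟨i, Set.mem_iUnion.2 ⟨j, Set.mem_iUnion.2 ⟨hij, hxij⟩⟩⟩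
  refine measure_mono_null hsub ?_
  refine measure_iUnion_null fun i => measure_iUnion_null fun j => measure_iUnion_null fun hij => ?_
  exact pair_null i j hij

lemma measurableSet_strictAnti {n : ℕ} :
    MeasurableSet {x : Fin n → ℝ | StrictAnti x} := by
  have : {x : Fin n → ℝ | StrictAnti x}
      = ⋂ (i : Fin n) (j : Fin n) (_ : i < j), {x : Fin n → ℝ | x j < x i} := by
    ext x
    simp only [Set.mem_setOf_eq, Set.mem_iInter]
    exact ⟨fun h i j hij => h hij, fun h a b hab => h a b hab⟩
  rw [this]
  exact MeasurableSet.iInter fun i => MeasurableSet.iInter fun j =>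
    MeasurableSet.iInter fun _ =>
      measurableSet_lt (measurable_pi_apply j) (measurable_pi_apply i)

lemma strictAnti_comp_extPerm_iff {D : ℕ} (x : Fin (D + 1) → ℝ) (π : Equiv.Perm (Fin D)) :
    StrictAnti (x ∘ extPerm π) ↔
      StrictAnti ((x ∘ Fin.castSucc) ∘ π) ∧ ∀ i : Fin D, x (Fin.last D) < x i.castSucc := by
  constructor
  · intro h
    refine ⟨fun a b hab => ?_, fun i => ?_⟩
    · have := h (show (a.castSucc : Fin (D+1)) < b.castSucc from
        Fin.castSucc_lt_castSucc_iff.mpr hab)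
      simpa using this
    · have := h (Fin.castSucc_lt_last (π.symm i))
      simpa using this
  · rintro ⟨h1, h2⟩
    intro a b hab
    induction b using Fin.lastCases with
    | last =>
      have ha : a ≠ Fin.last D := ne_of_lt hab
      obtain ⟨a', rfl⟩ : ∃ a' : Fin D, a'.castSucc = a :=
        ⟨a.castPred ha, Fin.castSucc_castPred a ha⟩
      simpa using h2 (π a')
    | cast b' =>
      have ha : a ≠ Fin.last D := ne_of_lt (lt_of_lt_of_le hab (Fin.castSucc_lt_last b').le)
      obtain ⟨a', rfl⟩ : ∃ a' : Fin D, a'.castSucc = a :=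
        ⟨a.castPred ha, Fin.castSucc_castPred a ha⟩
      have hab' : a' < b' := Fin.castSucc_lt_castSucc_iff.mp hab
      simpa using h1 hab'

lemma measure_B {D : ℕ} (t : ℝ) :
    (Measure.pi fun _ : Fin (D + 1) => ν)
      {x | (∀ i : Fin D, x (Fin.last D) < x i.castSucc) ∧ x (Fin.last D) ≤ t}
    = ∫⁻ y in Set.Iic t, (ν (Set.Ioi y)) ^ D ∂ν := by
  have mp := measurePreserving_piFinSuccAbove (fun _ : Fin (D + 1) => ν) (Fin.last D)
  set e := MeasurableEquiv.piFinSuccAbove (fun _ : Fin (D + 1) => ℝ) (Fin.last D) with he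
  set T : Set (ℝ × (Fin D → ℝ)) := {p | (∀ i, p.1 < p.2 i) ∧ p.1 ≤ t} with hT
  have hTm : MeasurableSet T := by
    have : T = (⋂ i : Fin D, {p : ℝ × (Fin D → ℝ) | p.1 < p.2 i}) ∩ {p | p.1 ≤ t} := by
      ext p; simp [hT]
    rw [this]
    exact (MeasurableSet.iInter fun i =>
      measurableSet_lt measurable_fst ((measurable_pi_apply i).comp measurable_snd)).inter
      (measurableSet_le measurable_fst measurable_const)
  have hset : {x : Fin (D + 1) → ℝ |
        (∀ i : Fin D, x (Fin.last D) < x i.castSucc) ∧ x (Fin.last D) ≤ t}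
      = e ⁻¹' T := by
    ext x
    simp [he, hT, MeasurableEquiv.piFinSuccAbove_apply, Fin.removeNth, Fin.succAbove_last, Fin.init]
  rw [hset, mp.measure_preimage hTm.nullMeasurableSet, Measure.prod_apply hTm]
  have hfiber : ∀ y : ℝ, (Measure.pi fun _ : Fin D => ν) (Prod.mk y ⁻¹' T)
      = Set.indicator (Set.Iic t) (fun y => (ν (Set.Ioi y)) ^ D) y := by
    intro y
    by_cases hy : y ≤ t
    · have hpre : Prod.mk y ⁻¹' T = Set.univ.pi (fun _ : Fin D => Set.Ioi y) := by
        ext z; simp [hT, hy]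
      rw [hpre, Measure.pi_pi (fun _ : Fin D => ν)]
      simp [Set.indicator_of_mem, hy, Finset.prod_const]
    · have hpre : Prod.mk y ⁻¹' T = ∅ := by
        ext z; simp [hT, hy]
      rw [hpre]
      simp [Set.indicator_of_notMem, hy]
  simp_rw [hfiber]
  rw [lintegral_indicator]
  exact measurableSet_Iic

lemma part1_count {D : ℕ} [NullSingletonClass ν] (t : ℝ) :
    (Measure.pi fun _ : Fin (D + 1) => ν)
      {x | (∀ i : Fin D, x (Fin.last D) < x i.castSucc) ∧ x (Fin.last D) ≤ t}
    = (D.factorial : ℝ≥0∞) *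
      (Measure.pi fun _ : Fin (D + 1) => ν) {x | StrictAnti x ∧ x (Fin.last D) ≤ t} := by
  set m : Measure (Fin (D + 1) → ℝ) := Measure.pi fun _ => ν with hm
  set A : Set (Fin (D + 1) → ℝ) := {x | StrictAnti x ∧ x (Fin.last D) ≤ t} with hA
  have hAm : MeasurableSet A :=
    measurableSet_strictAnti.inter
      (measurableSet_le (measurable_pi_apply _) measurable_const)
  set C : Equiv.Perm (Fin D) → Set (Fin (D + 1) → ℝ) :=
    fun π => (fun x => x ∘ extPerm π) ⁻¹' A with hC
  have hCmem : ∀ π x, x ∈ C π ↔ StrictAnti (x ∘ extPerm π) ∧ x (Fin.last D) ≤ t := by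
    intro π x
    simp only [hC, Set.mem_preimage, hA, Set.mem_setOf_eq, Function.comp_apply, extPerm_last]
  have hCdisj : Pairwise (Function.onFun Disjoint C) := by
    intro π π' hne
    rw [Function.onFun, Set.disjoint_left]
    intro x hx hx'
    rw [hCmem] at hx hx'
    have h1 := (strictAnti_comp_extPerm_iff x π).mp hx.1
    have h2 := (strictAnti_comp_extPerm_iff x π').mp hx'.1
    have hz : Function.Injective (x ∘ Fin.castSucc) := by
      intro a b hab
      have := ((h1.1.injective).eq_iff.mp
        (show ((x ∘ Fin.castSucc) ∘ π) (π.symm a) = ((x ∘ Fin.castSucc) ∘ π) (π.symm b) by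
          simpa using hab))
      simpa using congrArg π this
    obtain ⟨π₀, _, huniq⟩ := exists_unique_sortPerm hz
    exact hne ((huniq π h1.1).trans (huniq π' h2.1).symm)
  have hCunion : (⋃ π, C π)
      = {x | Function.Injective (x ∘ Fin.castSucc)} ∩
        {x | (∀ i : Fin D, x (Fin.last D) < x i.castSucc) ∧ x (Fin.last D) ≤ t} := by
    ext x
    simp only [Set.mem_iUnion, Set.mem_inter_iff, Set.mem_setOf_eq]
    constructor
    · rintro ⟨π, hx⟩
      rw [hCmem] at hx
      have h1 := (strictAnti_comp_extPerm_iff x π).mp hx.1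
      refine ⟨?_, h1.2, hx.2⟩
      intro a b hab
      have := ((h1.1.injective).eq_iff.mp
        (show ((x ∘ Fin.castSucc) ∘ π) (π.symm a) = ((x ∘ Fin.castSucc) ∘ π) (π.symm b) by
          simpa using hab))
      simpa using congrArg π this
    · rintro ⟨hinj, hgt, hle⟩
      obtain ⟨π, hπ, -⟩ := exists_unique_sortPerm hinj
      exact ⟨π, (hCmem π x).mpr ⟨(strictAnti_comp_extPerm_iff x π).mpr ⟨hπ, hgt⟩, hle⟩⟩
  have hCmeas : ∀ π, MeasurableSet (C π) :=
    fun π => (measurable_pi_lambda _ fun i => measurable_pi_apply _) hAm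
  have hCval : ∀ π, m (C π) = m A :=
    fun π => (comp_perm_preserving (extPerm π)).measure_preimage hAm.nullMeasurableSet
  have hsum : m (⋃ π, C π) = (D.factorial : ℝ≥0∞) * m A := by
    rw [measure_iUnion hCdisj hCmeas, tsum_fintype]
    simp only [hCval, Finset.sum_const, Finset.card_univ, Fintype.card_perm, Fintype.card_fin,
      nsmul_eq_mul]
  -- the B set differs from the union by a null set
  set B : Set (Fin (D + 1) → ℝ) :=
    {x | (∀ i : Fin D, x (Fin.last D) < x i.castSucc) ∧ x (Fin.last D) ≤ t} with hB
  have hBsub : B ⊆ (⋃ π, C π) ∪ {x | ¬ Function.Injective x} := by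
    intro x hx
    by_cases hinj : Function.Injective (x ∘ Fin.castSucc)
    · exact Or.inl (hCunion ▸ ⟨hinj, hx⟩)
    · refine Or.inr fun hxinj => hinj (hxinj.comp (Fin.castSucc_injective D))
  have hBeq : m B = m (⋃ π, C π) := by
    refine le_antisymm ?_ (measure_mono (by rw [hCunion]; exact Set.inter_subset_right))
    calc m B ≤ m ((⋃ π, C π) ∪ {x | ¬ Function.Injective x}) := measure_mono hBsub
    _ ≤ m (⋃ π, C π) + m {x | ¬ Function.Injective x} := measure_union_le _ _
    _ = m (⋃ π, C π) := by rw [noninj_null, add_zero]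
  rw [show m B = (Measure.pi fun _ : Fin (D + 1) => ν) B from rfl] at hBeq
  rw [hBeq, hsum]

lemma part2_count {D : ℕ} [NullSingletonClass ν] :
    (1 : ℝ≥0∞) = ((D + 1).factorial : ℝ≥0∞) *
      (Measure.pi fun _ : Fin (D + 1) => ν) {x | StrictAnti x} := by
  set m : Measure (Fin (D + 1) → ℝ) := Measure.pi fun _ => ν with hm
  set A : Set (Fin (D + 1) → ℝ) := {x | StrictAnti x} with hA
  have hAm : MeasurableSet A := measurableSet_strictAnti
  set C : Equiv.Perm (Fin (D + 1)) → Set (Fin (D + 1) → ℝ) :=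
    fun τ => (fun x => x ∘ τ) ⁻¹' A with hC
  have hCmem : ∀ τ x, x ∈ C τ ↔ StrictAnti (x ∘ τ) := fun τ x => Iff.rfl
  have hinj_of : ∀ (τ : Equiv.Perm (Fin (D + 1))) (x : Fin (D + 1) → ℝ),
      StrictAnti (x ∘ τ) → Function.Injective x := by
    intro τ x h a b hab
    have := (h.injective).eq_iff.mp
      (show (x ∘ τ) (τ.symm a) = (x ∘ τ) (τ.symm b) by simpa using hab)
    simpa using congrArg τ this
  have hCdisj : Pairwise (Function.onFun Disjoint C) := by
    intro τ τ' hne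
    rw [Function.onFun, Set.disjoint_left]
    intro x hx hx'
    obtain ⟨τ₀, -, huniq⟩ := exists_unique_sortPerm (hinj_of τ x hx)
    exact hne ((huniq τ hx).trans (huniq τ' hx').symm)
  have hCunion : (⋃ τ, C τ) = {x | Function.Injective x} := by
    ext x
    simp only [Set.mem_iUnion, Set.mem_setOf_eq]
    constructor
    · rintro ⟨τ, hx⟩; exact hinj_of τ x hx
    · intro hinj
      obtain ⟨τ, hτ, -⟩ := exists_unique_sortPerm hinj
      exact ⟨τ, hτ⟩
  have hCmeas : ∀ τ, MeasurableSet (C τ) :=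
    fun τ => (measurable_pi_lambda _ fun i => measurable_pi_apply _) hAm
  have hCval : ∀ τ, m (C τ) = m A :=
    fun τ => (comp_perm_preserving τ).measure_preimage hAm.nullMeasurableSet
  have hsum : m (⋃ τ, C τ) = ((D + 1).factorial : ℝ≥0∞) * m A := by
    rw [measure_iUnion hCdisj hCmeas, tsum_fintype]
    simp only [hCval, Finset.sum_const, Finset.card_univ, Fintype.card_perm, Fintype.card_fin,
      nsmul_eq_mul]
  have h1 : m (⋃ τ, C τ) = 1 := by
    refine le_antisymm prob_le_one ?_
    have huniv : (Set.univ : Set (Fin (D + 1) → ℝ))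
        ⊆ (⋃ τ, C τ) ∪ {x | ¬ Function.Injective x} := by
      intro x _
      by_cases hinj : Function.Injective x
      · exact Or.inl (hCunion ▸ hinj)
      · exact Or.inr hinj
    calc (1 : ℝ≥0∞) = m Set.univ := (measure_univ).symm
    _ ≤ m ((⋃ τ, C τ) ∪ {x | ¬ Function.Injective x}) := measure_mono huniv
    _ ≤ m (⋃ τ, C τ) + m {x | ¬ Function.Injective x} := measure_union_le _ _
    _ = m (⋃ τ, C τ) := by rw [noninj_null, add_zero]
  rw [← h1, hsum]

end core

section gaussAffine
variable {m s : ℝ}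

lemma gaussianReal_eq_map (hs : 0 < s) :
    gaussianReal m ⟨s ^ 2, sq_nonneg s⟩
      = Measure.map (fun u => s * u + m) (gaussianReal 0 1) := by
  have h1 : Measure.map (fun u : ℝ => s * u) (gaussianReal 0 1)
      = gaussianReal 0 ⟨s ^ 2, sq_nonneg s⟩ := by
    rw [show (fun u : ℝ => s * u) = (s * ·) from rfl, gaussianReal_map_const_mul]
    norm_num
    rfl
  have h2 : Measure.map (· + m) (gaussianReal 0 ⟨s ^ 2, sq_nonneg s⟩)
      = gaussianReal m ⟨s ^ 2, sq_nonneg s⟩ := by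
    simpa using gaussianReal_map_add_const (μ := 0) (v := ⟨s ^ 2, sq_nonneg s⟩) m
  have hg : Measurable (fun x : ℝ => x + m) := by fun_prop
  have hf : Measurable (fun u : ℝ => s * u) := by fun_prop
  rw [← h2, ← h1, Measure.map_map hg hf]
  rfl

lemma gaussianReal_Iic (hs : 0 < s) (y : ℝ) :
    gaussianReal m ⟨s ^ 2, sq_nonneg s⟩ (Set.Iic y)
      = ENNReal.ofReal (stdCDF ((y - m) / s)) := by
  have hmble : Measurable (fun u : ℝ => s * u + m) := by fun_prop
  rw [gaussianReal_eq_map hs, Measure.map_apply hmble measurableSet_Iic]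
  have hpre : (fun u => s * u + m) ⁻¹' Set.Iic y = Set.Iic ((y - m) / s) := by
    ext u
    simp only [Set.mem_preimage, Set.mem_Iic]
    rw [le_div_iff₀ hs]
    constructor <;> intro h <;> nlinarith
  rw [hpre, gaussianReal_std_Iic]

lemma gaussianReal_Ioi_toReal (hs : 0 < s) (y : ℝ) :
    ((gaussianReal m ⟨s ^ 2, sq_nonneg s⟩) (Set.Ioi y)).toReal
      = 1 - stdCDF ((y - m) / s) := by
  haveI : IsProbabilityMeasure (gaussianReal m ⟨s ^ 2, sq_nonneg s⟩) :=
    instIsProbabilityMeasureGaussianReal _ _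
  have hcompl : Set.Ioi y = (Set.Iic y)ᶜ := Set.compl_Iic.symm
  have hnn : 0 ≤ stdCDF ((y - m) / s) := integral_nonneg fun x => stdPhi_nonneg x
  have hle : ENNReal.ofReal (stdCDF ((y - m) / s)) ≤ 1 := by
    rw [← gaussianReal_Iic hs]; exact prob_le_one
  rw [hcompl, prob_compl_eq_one_sub measurableSet_Iic, gaussianReal_Iic hs,
    ENNReal.toReal_sub_of_le hle ENNReal.one_ne_top, ENNReal.toReal_one,
    ENNReal.toReal_ofReal hnn]

lemma gaussianPDFReal_eq (hs : 0 < s) (x : ℝ) :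
    gaussianPDFReal m ⟨s ^ 2, sq_nonneg s⟩ x = (1 / s) * stdPhi ((x - m) / s) := by
  unfold gaussianPDFReal stdPhi
  have hπ : (0:ℝ) < 2 * Real.pi := by positivity
  change (√(2 * Real.pi * s ^ 2))⁻¹ * Real.exp (-(x - m) ^ 2 / (2 * s ^ 2)) = _
  have hsqrt : Real.sqrt (2 * Real.pi * s ^ 2) = Real.sqrt (2 * Real.pi) * s := by
    rw [Real.sqrt_mul hπ.le, Real.sqrt_sq hs.le]
  have hexp : -(x - m) ^ 2 / (2 * s ^ 2) = -((x - m) / s) ^ 2 / 2 := by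
    rw [div_pow]; ring
  rw [hsqrt, hexp]
  have h2 : Real.sqrt (2 * Real.pi) ≠ 0 := by positivity
  field_simp

end gaussAffine

/-- for i.i.d. Gaussian samples `X₀, …, X_D`,
`P(X₀ > X₁ > ⋯ > X_D, X_D ≤ t) = (1/D!)·∫_{-∞}^t (1-Φ((x-μ)/σ))^D (1/σ)φ((x-μ)/σ) dx`
for every real `t`; in particular `P(X₀ > ⋯ > X_D) = 1/(D+1)!`, so the conditional
density of `X_D` given the all-decreasing pattern is `BN(1, D+1, μ, σ)`. -/
theorem all_decreasing_pattern
    {Ω : Type*} [MeasurableSpace Ω] (P : Measure Ω) [IsProbabilityMeasure P]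
    (D : ℕ) (hD : 1 ≤ D) (μ σ : ℝ) (hσ : 0 < σ)
    (X : Fin (D + 1) → Ω → ℝ) (hmeas : ∀ i, Measurable (X i))
    (hindep : iIndepFun X P)
    (hdist : ∀ i, Measure.map (X i) P = gaussianReal μ ⟨σ ^ 2, sq_nonneg σ⟩) :
    (∀ t : ℝ,
      (P ((⋂ j : Fin D, {ω | X j.castSucc ω > X j.succ ω}) ∩
          {ω | X (Fin.last D) ω ≤ t})).toReal
        = (1 / (Nat.factorial D : ℝ)) *
            ∫ x in Set.Iic t,
              (1 - stdCDF ((x - μ) / σ)) ^ D * ((1 / σ) * stdPhi ((x - μ) / σ))) ∧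
    (P (⋂ j : Fin D, {ω | X j.castSucc ω > X j.succ ω})).toReal
        = 1 / (Nat.factorial (D + 1) : ℝ) := by
  set V : ℝ≥0 := ⟨σ ^ 2, sq_nonneg σ⟩ with hV
  set ν : Measure ℝ := gaussianReal μ V with hν
  have hV0 : V ≠ 0 := by
    intro h
    have : (V : ℝ) = 0 := by rw [h]; simp
    rw [hV] at this
    exact (pow_ne_zero 2 hσ.ne') this
  haveI : NullSingletonClass ν := by
    constructor
    intro a
    rw [hν, gaussianReal_of_var_ne_zero _ hV0,
      withDensity_apply _ (measurableSet_singleton a)]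
    exact setLIntegral_measure_zero _ _ (measure_singleton a)
  -- the law of the whole vector is the product measure
  have hT : Measurable (fun ω => fun i => X i ω) :=
    measurable_pi_lambda _ fun i => hmeas i
  have hmap : P.map (fun ω => fun i => X i ω) = Measure.pi (fun _ : Fin (D + 1) => ν) := by
    refine (Measure.pi_eq (μ := fun _ : Fin (D + 1) => ν) fun s hs => ?_).symm
    rw [Measure.map_apply hT (MeasurableSet.univ_pi hs)]
    have hpre : (fun ω => fun i => X i ω) ⁻¹' Set.univ.pi s = ⋂ i, X i ⁻¹' s i := by
      ext ω; simp [Set.mem_pi]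
    rw [hpre, hindep.meas_iInter (fun i => ⟨s i, hs i, rfl⟩)]
    exact Finset.prod_congr rfl fun i _ => by
      rw [← Measure.map_apply (hmeas i) (hs i), hdist i]
  set m : Measure (Fin (D + 1) → ℝ) := Measure.pi (fun _ : Fin (D + 1) => ν) with hmm
  -- identify the decreasing event
  have hEvent : (⋂ j : Fin D, {ω | X j.castSucc ω > X j.succ ω})
      = (fun ω => fun i => X i ω) ⁻¹' {x : Fin (D + 1) → ℝ | StrictAnti x} := by
    ext ω
    simp only [Set.mem_iInter, Set.mem_setOf_eq, Set.mem_preimage, gt_iff_lt,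
      Fin.strictAnti_iff_succ_lt]
  have hAmeas : MeasurableSet {x : Fin (D + 1) → ℝ | StrictAnti x} := measurableSet_strictAnti
  constructor
  · -- part 1
    intro t
    have hAtmeas : MeasurableSet {x : Fin (D + 1) → ℝ | StrictAnti x ∧ x (Fin.last D) ≤ t} :=
      hAmeas.inter (measurableSet_le (measurable_pi_apply _) measurable_const)
    have hset : (⋂ j : Fin D, {ω | X j.castSucc ω > X j.succ ω}) ∩ {ω | X (Fin.last D) ω ≤ t}
        = (fun ω => fun i => X i ω) ⁻¹'
            {x : Fin (D + 1) → ℝ | StrictAnti x ∧ x (Fin.last D) ≤ t} := by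
      rw [hEvent]; ext ω; simp
    have hPA : P ((⋂ j : Fin D, {ω | X j.castSucc ω > X j.succ ω})
        ∩ {ω | X (Fin.last D) ω ≤ t})
        = m {x : Fin (D + 1) → ℝ | StrictAnti x ∧ x (Fin.last D) ≤ t} := by
      rw [hset, ← Measure.map_apply hT hAtmeas, hmap]
    have hfac0 : (D.factorial : ℝ≥0∞) ≠ 0 := Nat.cast_ne_zero.mpr D.factorial_ne_zero
    have hfacTop : (D.factorial : ℝ≥0∞) ≠ ⊤ := ENNReal.natCast_ne_top _
    have hmA : m {x : Fin (D + 1) → ℝ | StrictAnti x ∧ x (Fin.last D) ≤ t}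
        = (D.factorial : ℝ≥0∞)⁻¹ * ∫⁻ y in Set.Iic t, (ν (Set.Ioi y)) ^ D ∂ν := by
      rw [← measure_B (ν := ν) t, part1_count (ν := ν) t, ← mul_assoc,
        ENNReal.inv_mul_cancel hfac0 hfacTop, one_mul]
    -- convert the lintegral to a Bochner integral
    set G : ℝ → ℝ := fun y => (ν (Set.Ioi y)).toReal with hG
    have hGanti : Antitone G := fun a b hab =>
      ENNReal.toReal_mono (measure_ne_top _ _) (measure_mono (Set.Ioi_subset_Ioi hab))
    have hGmeas : Measurable G := hGanti.measurable
    have hG0 : ∀ y, 0 ≤ G y := fun y => ENNReal.toReal_nonneg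
    have hG1 : ∀ y, G y ≤ 1 := by
      intro y
      have h := prob_le_one (μ := ν) (s := Set.Ioi y)
      calc G y ≤ (1 : ℝ≥0∞).toReal := ENNReal.toReal_mono ENNReal.one_ne_top h
      _ = 1 := ENNReal.toReal_one
    have hint : Integrable (fun y => G y ^ D) (ν.restrict (Set.Iic t)) := by
      refine Integrable.mono' (integrable_const (1 : ℝ))
        ((hGmeas.pow_const D).aestronglyMeasurable) ?_
      filter_upwards with y
      rw [Real.norm_eq_abs, abs_of_nonneg (pow_nonneg (hG0 y) D)]
      exact pow_le_one₀ (hG0 y) (hG1 y)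
    have hnn : 0 ≤ᵐ[ν.restrict (Set.Iic t)] fun y => G y ^ D :=
      Filter.Eventually.of_forall fun y => pow_nonneg (hG0 y) D
    have hlin : ∫⁻ y in Set.Iic t, (ν (Set.Ioi y)) ^ D ∂ν
        = ENNReal.ofReal (∫ y in Set.Iic t, G y ^ D ∂ν) := by
      rw [ofReal_integral_eq_lintegral_ofReal hint hnn]
      refine lintegral_congr fun y => ?_
      rw [ENNReal.ofReal_pow (hG0 y), hG, ENNReal.ofReal_toReal (measure_ne_top _ _)]
    have hInn : 0 ≤ ∫ y in Set.Iic t, G y ^ D ∂ν :=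
      integral_nonneg fun y => pow_nonneg (hG0 y) D
    -- rewrite the Bochner integral as the stated Lebesgue integral
    have hGeq : ∀ y, G y = 1 - stdCDF ((y - μ) / σ) := fun y =>
      gaussianReal_Ioi_toReal hσ y
    have hpdf_meas : Measurable fun x => Real.toNNReal (gaussianPDFReal μ V x) :=
      (measurable_gaussianPDFReal μ V).real_toNNReal
    have hIeq : ∫ y in Set.Iic t, G y ^ D ∂ν
        = ∫ x in Set.Iic t,
            (1 - stdCDF ((x - μ) / σ)) ^ D * ((1 / σ) * stdPhi ((x - μ) / σ)) := by
      have hwd : ν = volume.withDensity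
          (fun x => (Real.toNNReal (gaussianPDFReal μ V x) : ℝ≥0∞)) := by
        rw [hν, gaussianReal_of_var_ne_zero _ hV0]
        rfl
      rw [hwd, setIntegral_withDensity_eq_setIntegral_smul hpdf_meas _ measurableSet_Iic]
      refine integral_congr_ae (Filter.Eventually.of_forall fun x => ?_)
      have hpdf : gaussianPDFReal μ V x = (1 / σ) * stdPhi ((x - μ) / σ) := by
        rw [hV]; exact gaussianPDFReal_eq hσ x
      simp only [NNReal.smul_def]
      rw [Real.coe_toNNReal _ (gaussianPDFReal_nonneg μ V x), hpdf, hGeq x, smul_eq_mul]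
      ring
    rw [hPA, hmA, hlin, ENNReal.toReal_mul, ENNReal.toReal_inv, ENNReal.toReal_natCast,
      ENNReal.toReal_ofReal hInn, hIeq]
    simp only [one_div]
  · -- part 2
    have hPA : P (⋂ j : Fin D, {ω | X j.castSucc ω > X j.succ ω})
        = m {x : Fin (D + 1) → ℝ | StrictAnti x} := by
      rw [hEvent, ← Measure.map_apply hT hAmeas, hmap]
    have hfac0 : ((D + 1).factorial : ℝ≥0∞) ≠ 0 := Nat.cast_ne_zero.mpr (D + 1).factorial_ne_zero
    have hfacTop : ((D + 1).factorial : ℝ≥0∞) ≠ ⊤ := ENNReal.natCast_ne_top _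
    have hmA : m {x : Fin (D + 1) → ℝ | StrictAnti x} = ((D + 1).factorial : ℝ≥0∞)⁻¹ := by
      have h := part2_count (ν := ν) (D := D)
      have h2 : ((D + 1).factorial : ℝ≥0∞)⁻¹ * 1
          = ((D + 1).factorial : ℝ≥0∞)⁻¹ *
            (((D + 1).factorial : ℝ≥0∞) * m {x : Fin (D + 1) → ℝ | StrictAnti x}) := by
        rw [← h]
      rw [mul_one, ← mul_assoc, ENNReal.inv_mul_cancel hfac0 hfacTop, one_mul] at h2
      exact h2.symm
    rw [hPA, hmA, ENNReal.toReal_inv, ENNReal.toReal_natCast, one_div]
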